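/- Let A be an invertible N×N complex matrix with ‖exp(tA)‖ ≤ 1 for all t ≥ 0, ‖A⁻¹‖ ≤ C₁ and ‖τ·A·exp(τA)‖ ≤ C₄ for all τ ≥ 0. Fix an explicit s-stage Runge–Kutta tableau whose nodes satisfy 0 ≤ c₁ < c₂ < ⋯ < c_s = 1 (so that the last node equals 1). Let T > 0, M, C₃ ≥ 0, 0 ≤ ε ≤ 1, let F : ℝ × ℂ^N → ℂ^N satisfy ‖F(t,x)‖ ≤ M, let β : [0,T] → ℂ^N satisfy ‖A⁻¹β(t)‖ ≤ C₃, set B = sup_{t∈[0,T]} ‖β(t)‖, and let u, d : [0,T] → ℂ^N with u differentiable, u′(t) = A·u(t) + β(t) + F(t,u(t)) + d(t), ‖u(t)‖ ≤ M and ‖d(t)‖ ≤ ε for all t ∈ [0,T]. Then there exists a constant C, depending only on the tableau, M, C₁, C₃ and C₄, such that for every k ∈ (0,1] and every t_n with t_n, t_n + k ∈ [0,T], the Lawson step with boundary data β from U = u(t_n) at time t_n satisfies both ‖U⁺ − u(t_n + k)‖ ≤ C·(1 + k·B) and ‖A⁻¹(U⁺ − u(t_n + k))‖ ≤ C·k.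 -/

import Mathlib

open MeasureTheory Matrix

attribute [local instance] Matrix.linftyOpNormedAddCommGroup Matrix.linftyOpNormedRing
  Matrix.linftyOpNormedAlgebra

/-- `phi j s M` is `φ_j(s M)`: `φ_0(sM) = exp(sM)` and, for `j ≥ 1`,
`φ_j(sM) = s^{-j} ∫_0^s exp((s-τ)M) τ^{j-1}/(j-1)! dτ`. -/
noncomputable def phi {N : ℕ} (j : ℕ) (s : ℝ) (M : Matrix (Fin N) (Fin N) ℂ) :
    Matrix (Fin N) (Fin N) ℂ :=
  match j with
  | 0 => NormedSpace.exp (s • M)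
  | Nat.succ j =>
      (s ^ (j + 1))⁻¹ •
        ∫ τ in (0:ℝ)..s, (τ ^ j / (Nat.factorial j : ℝ)) • NormedSpace.exp ((s - τ) • M)

/-- An explicit `s`-stage Runge-Kutta tableau: coefficients `a i j` (only the entries with
`j < i` are used by the schemes below, so the tableau is explicit), weights `b i` and
nodes `c i ∈ [0,1]`. -/
structure RKTableau (s : ℕ) where
  a : Fin s → Fin s → ℝ
  b : Fin s → ℝ
  c : Fin s → ℝ
  c_nonneg : ∀ i, 0 ≤ c i
  c_le_one : ∀ i, c i ≤ 1

/-- The stages `K_i` of the Lawson method with tableau `tab`, matrix `A`, step size `k`,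
nonlinearity `F` and boundary data `β`, starting from the value `U` at time `t`:
`K_i = exp(c_i kA)U + k Σ_{j<i} a_{ij} exp((c_i − c_j)kA)(β(t + c_j k) + F(t + c_j k, K_j))`. -/
noncomputable def lawsonStages {s N : ℕ} (tab : RKTableau s) (A : Matrix (Fin N) (Fin N) ℂ)
    (k : ℝ) (F : ℝ → (Fin N → ℂ) → Fin N → ℂ) (β : ℝ → Fin N → ℂ) (t : ℝ) (U : Fin N → ℂ) :
    Fin s → Fin N → ℂ
  | i =>
    (NormedSpace.exp ((tab.c i * k) • A)).mulVec U +
      k • ∑ j ∈ (Finset.univ.filter (fun j => j < i)).attach,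
        tab.a i j.1 • (NormedSpace.exp (((tab.c i - tab.c j.1) * k) • A)).mulVec
          (β (t + tab.c j.1 * k) +
            F (t + tab.c j.1 * k) (lawsonStages tab A k F β t U j.1))
  termination_by i => i.1
  decreasing_by
    have hj := j.2
    simp only [Finset.mem_filter, Finset.mem_univ, true_and] at hj
    exact hj

/-- One step of the Lawson method:
`U⁺ = exp(kA)U + k Σ_i b_i exp((1 − c_i)kA)(β(t + c_i k) + F(t + c_i k, K_i))`. -/
noncomputable def lawsonStep {s N : ℕ} (tab : RKTableau s) (A : Matrix (Fin N) (Fin N) ℂ)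
    (k : ℝ) (F : ℝ → (Fin N → ℂ) → Fin N → ℂ) (β : ℝ → Fin N → ℂ) (t : ℝ) (U : Fin N → ℂ) :
    Fin N → ℂ :=
  (NormedSpace.exp (k • A)).mulVec U +
    k • ∑ i : Fin s, tab.b i • (NormedSpace.exp (((1 - tab.c i) * k) • A)).mulVec
      (β (t + tab.c i * k) + F (t + tab.c i * k) (lawsonStages tab A k F β t U i))

/-!
Both bounds are stability estimates for the contraction semigroup `exp(tA)`. The first is the
triangle inequality: `‖exp(kA) u(tₙ)‖ ≤ M`, `‖u(tₙ + k)‖ ≤ M` and each stage contributes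
`k |bᵢ| (B + M)`. For the second, apply `A⁻¹` and split the defect as
`A⁻¹(exp(kA) - 1) u(tₙ) + (A⁻¹u(tₙ) - A⁻¹u(tₙ + k)) + k Σ bᵢ exp((1 - cᵢ)kA) A⁻¹(β + F)`.
The first term is `O(k)` because `τ ↦ A⁻¹ exp(τA)` has derivative `exp(τA)`; the second because
`(A⁻¹u)' = u + A⁻¹(β + F + d)` is bounded by `M + C₃ + C₁M + C₁`; the third because `A⁻¹`
commutes with `exp(σA)`.
-/

theorem RKTableau.add_c_mul_mem_Icc {s : ℕ} (tab : RKTableau s) (i : Fin s) {t k : ℝ}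
    (hk : 0 ≤ k) : t + tab.c i * k ∈ Set.Icc t (t + k) :=
  ⟨le_add_of_nonneg_right (mul_nonneg (tab.c_nonneg i) hk),
    add_le_add_right (mul_le_of_le_one_left hk (tab.c_le_one i)) t⟩

theorem norm_mul_exp_smul_sub_one_le {𝔸 : Type*} [NormedRing 𝔸] [NormedAlgebra ℝ 𝔸]
    [CompleteSpace 𝔸] {A A' : 𝔸} (hA' : A' * A = 1)
    (hexp : ∀ t : ℝ, 0 ≤ t → ‖NormedSpace.exp (t • A)‖ ≤ 1) {k : ℝ} (hk : 0 ≤ k) :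
    ‖A' * (NormedSpace.exp (k • A) - 1)‖ ≤ k := by
  have hderiv : ∀ τ ∈ Set.Icc 0 k, HasDerivWithinAt (fun τ : ℝ => A' * NormedSpace.exp (τ • A))
      (NormedSpace.exp (τ • A)) (Set.Icc 0 k) τ := by
    intro τ _
    have h := (hasDerivAt_exp_smul_const' (𝕂 := ℝ) A τ).const_mul A'
    rw [← mul_assoc, hA', one_mul] at h
    exact h.hasDerivWithinAt
  have h := norm_image_sub_le_of_norm_deriv_le_segment' hderiv
    (fun τ hτ => hexp τ hτ.1) k (Set.right_mem_Icc.2 hk)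
  simpa [mul_sub] using h

section MatrixOps

variable {𝕜 m n : Type*} [RCLike 𝕜] [Fintype m] [Fintype n]

theorem norm_mulVec_le_of_le {P : Matrix m n 𝕜} {v : n → 𝕜} {a b : ℝ}
    (hP : ‖P‖ ≤ a) (hv : ‖v‖ ≤ b) : ‖P *ᵥ v‖ ≤ a * b :=
  (linfty_opNorm_mulVec P v).trans
    (mul_le_mul hP hv (norm_nonneg v) ((norm_nonneg P).trans hP))

theorem HasDerivAt.mulVec_const_left {u : ℝ → n → 𝕜} {u' : n → 𝕜} {t : ℝ}
    (P : Matrix m n 𝕜) (hu : HasDerivAt u u' t) :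
    HasDerivAt (fun t => P *ᵥ u t) (P *ᵥ u') t :=
  ((LinearMap.toContinuousLinearMap (mulVecLin P)).restrictScalars ℝ).hasFDerivAt.comp_hasDerivAt
    t hu

end MatrixOps

section Semigroup

variable {𝕜 n : Type*} [RCLike 𝕜] [Fintype n] [DecidableEq n] {A : Matrix n n 𝕜}

theorem norm_exp_smul_mulVec_le (hexp : ∀ t : ℝ, 0 ≤ t → ‖NormedSpace.exp (t • A)‖ ≤ 1)
    {σ : ℝ} (hσ : 0 ≤ σ) (v : n → 𝕜) : ‖NormedSpace.exp (σ • A) *ᵥ v‖ ≤ ‖v‖ := by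
  simpa using norm_mulVec_le_of_le (hexp σ hσ) le_rfl

theorem inv_mulVec_exp_smul_mulVec (hA : IsUnit A.det) (σ : ℝ) (v : n → 𝕜) :
    A⁻¹ *ᵥ (NormedSpace.exp (σ • A) *ᵥ v) = NormedSpace.exp (σ • A) *ᵥ (A⁻¹ *ᵥ v) := by
  have hcomm : Commute A⁻¹ A := by
    rw [Commute, SemiconjBy, nonsing_inv_mul A hA, mul_nonsing_inv A hA]
  rw [mulVec_mulVec, mulVec_mulVec, ((hcomm.smul_right σ).exp_right).eq]

theorem norm_inv_mulVec_sub_le_of_hasDerivAt (hA : IsUnit A.det) {u g : ℝ → n → 𝕜}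
    {a b M L : ℝ} (hab : a ≤ b) (hu : ∀ t ∈ Set.Icc a b, HasDerivAt u (A *ᵥ u t + g t) t)
    (hM : ∀ t ∈ Set.Icc a b, ‖u t‖ ≤ M) (hg : ∀ t ∈ Set.Icc a b, ‖A⁻¹ *ᵥ g t‖ ≤ L) :
    ‖A⁻¹ *ᵥ u a - A⁻¹ *ᵥ u b‖ ≤ (M + L) * (b - a) := by
  have hderiv : ∀ t ∈ Set.Icc a b, HasDerivWithinAt (fun t => A⁻¹ *ᵥ u t)
      (u t + A⁻¹ *ᵥ g t) (Set.Icc a b) t := by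
    intro t ht
    have h := (hu t ht).mulVec_const_left A⁻¹
    rw [mulVec_add, mulVec_mulVec, nonsing_inv_mul A hA, one_mulVec] at h
    exact h.hasDerivWithinAt
  rw [norm_sub_rev]
  exact norm_image_sub_le_of_norm_deriv_le_segment' hderiv
    (fun t ht => (norm_add_le _ _).trans (add_le_add (hM t (Set.Ico_subset_Icc_self ht))
      (hg t (Set.Ico_subset_Icc_self ht)))) b (Set.right_mem_Icc.2 hab)

variable {ι : Type*} [Fintype ι] {b σ : ι → ℝ} {w : ι → n → 𝕜} {U V : n → 𝕜} {k M R : ℝ}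

theorem norm_smul_sum_smul_exp_smul_mulVec_le
    (hexp : ∀ t : ℝ, 0 ≤ t → ‖NormedSpace.exp (t • A)‖ ≤ 1) (hk : 0 ≤ k) (hσ : ∀ i, 0 ≤ σ i)
    (hw : ∀ i, ‖w i‖ ≤ R) :
    ‖k • ∑ i, b i • NormedSpace.exp (σ i • A) *ᵥ w i‖ ≤ k * ((∑ i, |b i|) * R) := by
  rw [norm_smul, Real.norm_of_nonneg hk, Finset.sum_mul]
  refine mul_le_mul_of_nonneg_left ((norm_sum_le _ _).trans (Finset.sum_le_sum fun i _ => ?_)) hk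
  rw [norm_smul, Real.norm_eq_abs]
  exact mul_le_mul_of_nonneg_left ((norm_exp_smul_mulVec_le hexp (hσ i) _).trans (hw i))
    (abs_nonneg _)

theorem norm_exp_mulVec_add_smul_sum_sub_le
    (hexp : ∀ t : ℝ, 0 ≤ t → ‖NormedSpace.exp (t • A)‖ ≤ 1) (hk : 0 ≤ k) (hσ : ∀ i, 0 ≤ σ i)
    (hw : ∀ i, ‖w i‖ ≤ R) (hU : ‖U‖ ≤ M) (hV : ‖V‖ ≤ M) :
    ‖NormedSpace.exp (k • A) *ᵥ U + k • ∑ i, b i • NormedSpace.exp (σ i • A) *ᵥ w i - V‖ ≤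
      2 * M + k * ((∑ i, |b i|) * R) := by
  have hsum := norm_smul_sum_smul_exp_smul_mulVec_le hexp hk hσ (b := b) hw
  calc _ ≤ ‖NormedSpace.exp (k • A) *ᵥ U‖ + ‖k • ∑ i, b i • NormedSpace.exp (σ i • A) *ᵥ w i‖
          + ‖V‖ := (norm_sub_le _ _).trans (add_le_add_left (norm_add_le _ _) _)
    _ ≤ M + k * ((∑ i, |b i|) * R) + M :=
        add_le_add (add_le_add ((norm_exp_smul_mulVec_le hexp hk U).trans hU) hsum) hV
    _ = 2 * M + k * ((∑ i, |b i|) * R) := by ring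

theorem inv_mulVec_exp_mulVec_add_smul_sum_sub (hA : IsUnit A.det) :
    A⁻¹ *ᵥ (NormedSpace.exp (k • A) *ᵥ U + k • ∑ i, b i • NormedSpace.exp (σ i • A) *ᵥ w i - V) =
      (A⁻¹ * (NormedSpace.exp (k • A) - 1)) *ᵥ U + (A⁻¹ *ᵥ U - A⁻¹ *ᵥ V) +
        k • ∑ i, b i • NormedSpace.exp (σ i • A) *ᵥ (A⁻¹ *ᵥ w i) := by
  simp only [mulVec_sub, mulVec_add, mulVec_smul, mulVec_sum, inv_mulVec_exp_smul_mulVec hA,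
    ← mulVec_mulVec, sub_mulVec, one_mulVec]
  abel

theorem norm_inv_mulVec_exp_mulVec_add_smul_sum_sub_le {L : ℝ} (hA : IsUnit A.det)
    (hexp : ∀ t : ℝ, 0 ≤ t → ‖NormedSpace.exp (t • A)‖ ≤ 1) (hk : 0 ≤ k) (hσ : ∀ i, 0 ≤ σ i)
    (hAw : ∀ i, ‖A⁻¹ *ᵥ w i‖ ≤ R) (hU : ‖U‖ ≤ M) (hUV : ‖A⁻¹ *ᵥ U - A⁻¹ *ᵥ V‖ ≤ L * k) :
    ‖A⁻¹ *ᵥ (NormedSpace.exp (k • A) *ᵥ U + k • ∑ i, b i • NormedSpace.exp (σ i • A) *ᵥ w i -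
      V)‖ ≤ k * (M + L + (∑ i, |b i|) * R) := by
  have hphi : ‖(A⁻¹ * (NormedSpace.exp (k • A) - 1)) *ᵥ U‖ ≤ k * M :=
    norm_mulVec_le_of_le (norm_mul_exp_smul_sub_one_le (nonsing_inv_mul A hA) hexp hk) hU
  have hsum := norm_smul_sum_smul_exp_smul_mulVec_le hexp hk hσ (b := b) hAw
  rw [inv_mulVec_exp_mulVec_add_smul_sum_sub hA]
  calc _ ≤ k * M + L * k + k * ((∑ i, |b i|) * R) :=
        (norm_add_le _ _).trans (add_le_add ((norm_add_le _ _).trans (add_le_add hphi hUV)) hsum)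
    _ = k * (M + L + (∑ i, |b i|) * R) := by ring

end Semigroup

theorem classical_local_error_last_node_one_general {s : ℕ} (tab : RKTableau s)
    (M C₁ C₃ C₄ : ℝ) (hM : 0 ≤ M) (hC₁ : 0 ≤ C₁) (hC₃ : 0 ≤ C₃) :
    ∃ C : ℝ, ∀ (N : ℕ) (A : Matrix (Fin N) (Fin N) ℂ), IsUnit A.det →
      (∀ t : ℝ, 0 ≤ t → ‖NormedSpace.exp (t • A)‖ ≤ 1) → ‖A⁻¹‖ ≤ C₁ →
      (∀ τ : ℝ, 0 ≤ τ → ‖τ • (A * NormedSpace.exp (τ • A))‖ ≤ C₄) →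
      ∀ T : ℝ, 0 < T → ∀ ε : ℝ, 0 ≤ ε → ε ≤ 1 →
      ∀ F : ℝ → (Fin N → ℂ) → Fin N → ℂ, (∀ t x, ‖F t x‖ ≤ M) →
      ∀ β : ℝ → Fin N → ℂ, (∀ t ∈ Set.Icc (0:ℝ) T, ‖A⁻¹.mulVec (β t)‖ ≤ C₃) →
      ∀ B : ℝ, (∀ t ∈ Set.Icc (0:ℝ) T, ‖β t‖ ≤ B) →
      ∀ u d : ℝ → Fin N → ℂ,
        (∀ t ∈ Set.Icc (0:ℝ) T,
          HasDerivAt u (A.mulVec (u t) + β t + F t (u t) + d t) t) →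
        (∀ t ∈ Set.Icc (0:ℝ) T, ‖u t‖ ≤ M) →
        (∀ t ∈ Set.Icc (0:ℝ) T, ‖d t‖ ≤ ε) →
      ∀ k : ℝ, 0 < k → k ≤ 1 →
      ∀ tn : ℝ, tn ∈ Set.Icc (0:ℝ) T → tn + k ∈ Set.Icc (0:ℝ) T →
        ‖lawsonStep tab A k F β tn (u tn) - u (tn + k)‖ ≤ C * (1 + k * B) ∧
        ‖A⁻¹.mulVec (lawsonStep tab A k F β tn (u tn) - u (tn + k))‖ ≤ C * k := by
  set Sb := ∑ i, |tab.b i| with hSb_def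
  set L := M + (C₃ + C₁ * M + C₁)
  set R := C₃ + C₁ * M
  have hSb : 0 ≤ Sb := Finset.sum_nonneg fun i _ => abs_nonneg _
  have hX : 0 ≤ 2 * M + Sb * (M + 1) := by positivity
  have hY : 0 ≤ M + L + Sb * R := by positivity
  refine ⟨2 * M + Sb * (M + 1) + (M + L + Sb * R), ?_⟩
  intro N A hA hexp hAinv _ T _ ε _ hε F hF β hβ B hB u d hu hum hd k hk hk1 tn htn htnk
  have hsub : Set.Icc tn (tn + k) ⊆ Set.Icc 0 T := Set.Icc_subset_Icc htn.1 htnk.2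
  have hnode : ∀ i, tn + tab.c i * k ∈ Set.Icc 0 T := fun i => hsub (tab.add_c_mul_mem_Icc i hk.le)
  have hσ : ∀ i, 0 ≤ (1 - tab.c i) * k := fun i =>
    mul_nonneg (sub_nonneg.2 (tab.c_le_one i)) hk.le
  have hβF : ∀ t ∈ Set.Icc 0 T, ∀ x, ‖β t + F t x‖ ≤ B + M := fun t ht x =>
    (norm_add_le _ _).trans (add_le_add (hB t ht) (hF t x))
  have hAβF : ∀ t ∈ Set.Icc 0 T, ∀ x, ‖A⁻¹ *ᵥ (β t + F t x)‖ ≤ C₃ + C₁ * M := fun t ht x => by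
    rw [mulVec_add]
    exact (norm_add_le _ _).trans (add_le_add (hβ t ht) (norm_mulVec_le_of_le hAinv (hF t x)))
  have hAd : ∀ t ∈ Set.Icc 0 T, ‖A⁻¹ *ᵥ d t‖ ≤ C₁ := fun t ht => by
    simpa using norm_mulVec_le_of_le hAinv ((hd t ht).trans hε)
  have hLip : ‖A⁻¹ *ᵥ u tn - A⁻¹ *ᵥ u (tn + k)‖ ≤ L * k := by
    have h := norm_inv_mulVec_sub_le_of_hasDerivAt hA (g := fun t => β t + F t (u t) + d t) (by linarith)
      (fun t ht => by simpa only [add_assoc] using hu t (hsub ht)) (fun t ht => hum t (hsub ht))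
      (fun t ht => by
        rw [mulVec_add A⁻¹ (β t + F t (u t))]
        exact (norm_add_le _ _).trans (add_le_add (hAβF t (hsub ht) _) (hAd t (hsub ht))))
    rwa [add_sub_cancel_left] at h
  have hB0 : 0 ≤ B := (norm_nonneg _).trans (hB tn htn)
  constructor
  · refine (norm_exp_mulVec_add_smul_sum_sub_le hexp hk.le hσ (fun i => hβF _ (hnode i) _)
      (hum _ htn) (hum _ htnk)).trans ?_
    rw [← hSb_def]
    nlinarith [mul_nonneg (mul_nonneg (sub_nonneg.2 hk1) hSb) hM,
      mul_nonneg (mul_nonneg hk.le hB0) (add_nonneg (mul_nonneg hSb hM) hM),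
      mul_nonneg hY (add_nonneg zero_le_one (mul_nonneg hk.le hB0))]
  · refine (norm_inv_mulVec_exp_mulVec_add_smul_sum_sub_le hA hexp hk.le hσ
      (fun i => hAβF _ (hnode i) _) (hum _ htn) hLip).trans ?_
    rw [← hSb_def]
    nlinarith [mul_nonneg hX hk.le]

/-- Classical Lawson local error, non-vanishing boundary conditions, strictly increasing nodes
with last node `c_s = 1`: `‖U⁺ − u(t_n+k)‖ ≤ C·(1 + k·B)` and `‖A⁻¹(U⁺ − u(t_n+k))‖ ≤ C·k`,
where `B` bounds `‖β‖` on `[0,T]` and `C` depends only on the tableau, `M`, `C₁`, `C₃`, `C₄`. -/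
theorem classical_local_error_last_node_one {s : ℕ} (hs : 0 < s) (tab : RKTableau s)
    (hc : StrictMono tab.c) (hcs : tab.c ⟨s - 1, Nat.sub_lt hs Nat.one_pos⟩ = 1)
    (M C₁ C₃ C₄ : ℝ) (hM : 0 ≤ M) (hC₁ : 0 ≤ C₁) (hC₃ : 0 ≤ C₃) (hC₄ : 0 ≤ C₄) :
    ∃ C : ℝ, ∀ (N : ℕ) (A : Matrix (Fin N) (Fin N) ℂ), IsUnit A.det →
      (∀ t : ℝ, 0 ≤ t → ‖NormedSpace.exp (t • A)‖ ≤ 1) → ‖A⁻¹‖ ≤ C₁ →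
      (∀ τ : ℝ, 0 ≤ τ → ‖τ • (A * NormedSpace.exp (τ • A))‖ ≤ C₄) →
      ∀ T : ℝ, 0 < T → ∀ ε : ℝ, 0 ≤ ε → ε ≤ 1 →
      ∀ F : ℝ → (Fin N → ℂ) → Fin N → ℂ, (∀ t x, ‖F t x‖ ≤ M) →
      ∀ β : ℝ → Fin N → ℂ, (∀ t ∈ Set.Icc (0:ℝ) T, ‖A⁻¹.mulVec (β t)‖ ≤ C₃) →
      ∀ B : ℝ, (∀ t ∈ Set.Icc (0:ℝ) T, ‖β t‖ ≤ B) →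
      ∀ u d : ℝ → Fin N → ℂ,
        (∀ t ∈ Set.Icc (0:ℝ) T,
          HasDerivAt u (A.mulVec (u t) + β t + F t (u t) + d t) t) →
        (∀ t ∈ Set.Icc (0:ℝ) T, ‖u t‖ ≤ M) →
        (∀ t ∈ Set.Icc (0:ℝ) T, ‖d t‖ ≤ ε) →
      ∀ k : ℝ, 0 < k → k ≤ 1 →
      ∀ tn : ℝ, tn ∈ Set.Icc (0:ℝ) T → tn + k ∈ Set.Icc (0:ℝ) T →
        ‖lawsonStep tab A k F β tn (u tn) - u (tn + k)‖ ≤ C * (1 + k * B) ∧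
        ‖A⁻¹.mulVec (lawsonStep tab A k F β tn (u tn) - u (tn + k))‖ ≤ C * k :=
  classical_local_error_last_node_one_general tab M C₁ C₃ C₄ hM hC₁ hC₃
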